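/- For H = S(SᵀAAᵀS)†Sᵀ with S ∈ ℝ^{m×q} and A ∈ ℝ^{m×n}, the matrix AᵀHA is idempotent: (AᵀHA)² = AᵀHA; consequently I − AᵀHA is an orthogonal projector. -/

import Mathlib

/-!
Write `B = Sᵀ A`, so that `Sᵀ A Aᵀ S = B Bᵀ` and `Aᵀ H A = Bᵀ P B`. The Penrose condition
`P (B Bᵀ) P = P` makes `Bᵀ P B` idempotent. Since `B Bᵀ` is symmetric, `Pᵀ` satisfies the Penrose
conditions as well, so by uniqueness of the pseudoinverse `P` is symmetric and so is `Bᵀ P B`.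
A symmetric idempotent `Bᵀ P B` is an orthogonal projector, and then so is `1 - Bᵀ P B`.
-/

open Matrix

/-- `P` is the Moore–Penrose pseudoinverse of `M` (Penrose conditions). -/
def IsMoorePenrose {q : ℕ} (M P : Matrix (Fin q) (Fin q) ℝ) : Prop :=
  M * P * M = M ∧ P * M * P = P ∧ (M * P)ᵀ = M * P ∧ (P * M)ᵀ = P * M

namespace IsMoorePenrose

variable {q : ℕ} {M P Q : Matrix (Fin q) (Fin q) ℝ}

theorem unique (hP : IsMoorePenrose M P) (hQ : IsMoorePenrose M Q) : P = Q := by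
  obtain ⟨hP₁, hP₂, hP₃, hP₄⟩ := hP
  obtain ⟨hQ₁, hQ₂, hQ₃, hQ₄⟩ := hQ
  have hMP : M * P = M * Q :=
    calc M * P = (M * Q * M * P)ᵀ := by rw [hQ₁, hP₃]
      _ = (M * P)ᵀ * (M * Q)ᵀ := by rw [Matrix.mul_assoc (M * Q), transpose_mul]
      _ = M * P * M * Q := by rw [hP₃, hQ₃, Matrix.mul_assoc (M * P)]
      _ = M * Q := by rw [hP₁]
  have hPM : P * M = Q * M :=
    calc P * M = (P * (M * Q * M))ᵀ := by rw [hQ₁, hP₄]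
      _ = (Q * M)ᵀ * (P * M)ᵀ := by rw [← transpose_mul]; simp only [Matrix.mul_assoc]
      _ = Q * (M * P * M) := by rw [hP₄, hQ₄]; simp only [Matrix.mul_assoc]
      _ = Q * M := by rw [hP₁]
  calc P = P * M * P := hP₂.symm
    _ = Q * (M * Q) := by rw [hPM, Matrix.mul_assoc, hMP]
    _ = Q := by rw [← Matrix.mul_assoc, hQ₂]

theorem transpose (hP : IsMoorePenrose M P) : IsMoorePenrose Mᵀ Pᵀ := by
  obtain ⟨hP₁, hP₂, hP₃, hP₄⟩ := hP
  refine ⟨?_, ?_, ?_, ?_⟩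
  · simpa only [transpose_mul, Matrix.mul_assoc] using congrArg Matrix.transpose hP₁
  · simpa only [transpose_mul, Matrix.mul_assoc] using congrArg Matrix.transpose hP₂
  · rw [← transpose_mul, transpose_transpose, hP₄]
  · rw [← transpose_mul, transpose_transpose, hP₃]

theorem transpose_eq_self (hM : Mᵀ = M) (hP : IsMoorePenrose M P) : Pᵀ = P :=
  (hM ▸ hP.transpose).unique hP

end IsMoorePenrose

theorem isStarProjection_transpose_mul_mul {n : Type*} [Fintype n] {q : ℕ}
    (B : Matrix (Fin q) n ℝ) {P : Matrix (Fin q) (Fin q) ℝ} (hP : IsMoorePenrose (B * Bᵀ) P) :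
    IsStarProjection (Bᵀ * P * B) := by
  have hPsymm : Pᵀ = P := hP.transpose_eq_self (by rw [transpose_mul, transpose_transpose])
  refine ⟨?_, ?_⟩
  · calc Bᵀ * P * B * (Bᵀ * P * B) = Bᵀ * (P * (B * Bᵀ) * P) * B := by
          simp only [Matrix.mul_assoc]
      _ = Bᵀ * P * B := by rw [hP.2.1, Matrix.mul_assoc]
  · rw [IsSelfAdjoint, star_eq_conjTranspose, conjTranspose_eq_transpose_of_trivial]
    simp only [transpose_mul, transpose_transpose, hPsymm, Matrix.mul_assoc]

theorem stmt_9 (m n q : ℕ) (S : Matrix (Fin m) (Fin q) ℝ) (A : Matrix (Fin m) (Fin n) ℝ)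
    (P : Matrix (Fin q) (Fin q) ℝ) (hP : IsMoorePenrose (Sᵀ * A * Aᵀ * S) P) :
    let H : Matrix (Fin m) (Fin m) ℝ := S * P * Sᵀ
    let M : Matrix (Fin n) (Fin n) ℝ := Aᵀ * H * A
    M * M = M ∧ (1 - M) * (1 - M) = 1 - M ∧ (1 - M)ᵀ = 1 - M := by
  intro H M
  have hN : Sᵀ * A * Aᵀ * S = (Sᵀ * A) * (Sᵀ * A)ᵀ := by
    simp only [transpose_mul, transpose_transpose, Matrix.mul_assoc]
  have hM : M = (Sᵀ * A)ᵀ * P * (Sᵀ * A) := by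
    simp only [M, H, transpose_mul, transpose_transpose, Matrix.mul_assoc]
  have hproj : IsStarProjection M := hM ▸ isStarProjection_transpose_mul_mul _ (hN ▸ hP)
  have hsymm := hproj.one_sub.isSelfAdjoint
  rw [IsSelfAdjoint, star_eq_conjTranspose, conjTranspose_eq_transpose_of_trivial] at hsymm
  exact ⟨hproj.isIdempotentElem, hproj.one_sub.isIdempotentElem, hsymm⟩
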